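/- Let (Y_i)_{i ∈ I} be a family of Esakia root systems and let ∏Y_i be their product Priestley space with projections π_i. Then ⊗Y_i = {C ∈ CC(∏Y_i) | π_i[C] is an upset of Y_i for every i ∈ I} is a closed subset of CC(∏Y_i) and a ⊴-upset of CC(∏Y_i) (if C₁ ∈ ⊗Y_i and C₁ ⊴ C₂ then C₂ ∈ ⊗Y_i); consequently, with the induced topology and order, ⊗Y_i is an Esakia root system. -/

import Mathlib

open Set TopologicalSpace

/-- The set of nonempty closed chains of a Priestley space `X`. -/
def CC (X : Type*) [TopologicalSpace X] [Preorder X] : Set (Set X) :=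
  {C | C.Nonempty ∧ IsClosed C ∧ IsChain (· ≤ ·) C}

variable {X : Type*} [TopologicalSpace X] [Preorder X]

/-- `□A = {C ∈ CC(X) | C ⊆ A}`. -/
def ccBox (A : Set X) : Set ↥(CC X) := {C | (C : Set X) ⊆ A}

/-- `◇A = {C ∈ CC(X) | C ∩ A ≠ ∅}`. -/
def ccDia (A : Set X) : Set ↥(CC X) := {C | ((C : Set X) ∩ A).Nonempty}

/-- The Vietoris topology on `CC X`, generated by the subbasis `{□V, ◇V | V clopen}`. -/
instance ccTop : TopologicalSpace ↥(CC X) :=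
  generateFrom {S | ∃ V : Set X, IsClopen V ∧ (S = ccBox V ∨ S = ccDia V)}

/-- The order `⊴` on closed chains: `C₁ ⊴ C₂` iff `C₂ ⊆ C₁` and `C₂` is an upset in `C₁`. -/
def lec (C₁ C₂ : Set X) : Prop :=
  C₂ ⊆ C₁ ∧ ∀ x ∈ C₂, ∀ y ∈ C₁, x ≤ y → y ∈ C₂

/-- The tensor product of a family of Esakia root systems: the nonempty closed chains of
the product whose projections are all upsets. -/
def tensor {I : Type*} (Y : I → Type*) [∀ i, TopologicalSpace (Y i)] [∀ i, Preorder (Y i)] :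
    Set ↥(CC (∀ i, Y i)) :=
  {C | ∀ i, IsUpperSet ((fun f => f i) '' (C : Set (∀ i, Y i)))}

/-! The nonempty closed chains of a compact Priestley space `X` form a closed subspace of the
Vietoris hyperspace `Compacts X` (being a chain is a closed condition, witnessed by clopen upper
sets), so `CC X` is compact. If `C ⊴ K` fails, either a point of `K` outside `C` or a point of `C`
above `K` yields a clopen `⊴`-upset of the form `□V` or `□U ∪ ◇(U ∩ W)` separating `C` from `K`;
hence `⊴` is closed and `⊴`-downsets of closed sets are closed. Downsets of open sets are open:
if `C ⊴ K` with `K` in a basic open `□(⋃ u) ∩ ⋂_{W ∈ u} ◇W`, pick a clopen lower set `G`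
containing `C \ ⋃ u` and missing `K`; every `C'` in `□(⋃ u ∪ G) ∩ ⋂_{W ∈ u} ◇(W \ G)` is
`⊴`-below the part of `C'` above chosen witnesses in the `W \ G`, which lies in the basic open.

For the product, `π_i[C]` failing to be an upset is an open condition on `C` because `↓W` is clopen
for clopen `W ⊆ Y_i`, and it is inherited along `⊴` because `C` is a chain. So `⊗Yᵢ` is a closed
`⊴`-upset of `CC(∏Yᵢ)`, and the properties of `CC(∏Yᵢ)` restrict to it. -/

open Topology

theorem IsCompact.exists_superset_mem_of_supClosed {α : Type*} [TopologicalSpace α] {K : Set α}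
    (hK : IsCompact K) {S : Set (Set α)} (hS : SupClosed S) (hSo : ∀ U ∈ S, IsOpen U)
    (hempty : ∅ ∈ S) (hcov : ∀ x ∈ K, ∃ U ∈ S, x ∈ U) : ∃ U ∈ S, K ⊆ U := by
  have : Nonempty S := ⟨⟨∅, hempty⟩⟩
  obtain ⟨⟨U, hU⟩, hKU⟩ := hK.elim_directed_cover (fun U : S => (U : Set α))
    (fun U => hSo U U.2)
    (fun x hx => let ⟨U, hU, hxU⟩ := hcov x hx; mem_iUnion.2 ⟨⟨U, hU⟩, hxU⟩)
    hS.directedOn.directed_val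
  exact ⟨U, hU, hKU⟩

theorem IsCompact.exists_isClopen_subset_of_subset_isOpen {α : Type*} [TopologicalSpace α]
    [T2Space α] [CompactSpace α] [TotallyDisconnectedSpace α] {K U : Set α} (hK : IsCompact K)
    (hU : IsOpen U) (hKU : K ⊆ U) : ∃ V, IsClopen V ∧ K ⊆ V ∧ V ⊆ U := by
  obtain ⟨V, ⟨hV, hVU⟩, hKV⟩ := hK.exists_superset_mem_of_supClosed
    (S := {V | IsClopen V ∧ V ⊆ U})
    (fun V ⟨hV, hVU⟩ W ⟨hW, hWU⟩ => ⟨hV.union hW, union_subset hVU hWU⟩)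
    (fun V hV => hV.1.isOpen) ⟨isClopen_empty, empty_subset U⟩
    (fun x hx => let ⟨V, hV, hxV, hVU⟩ := compact_exists_isClopen_in_isOpen hU (hKU hx)
      ⟨V, ⟨hV, hVU⟩, hxV⟩)
  exact ⟨V, hV, hKV, hVU⟩

theorem isClosed_setOf_rel_of_exists_isClopen {α : Type*} [TopologicalSpace α]
    {r : α → α → Prop}
    (h : ∀ a b, ¬r a b → ∃ U : Set α, IsClopen U ∧ (∀ c ∈ U, ∀ d, r c d → d ∈ U) ∧ a ∈ U ∧ b ∉ U) :
    IsClosed {p : α × α | r p.1 p.2} := by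
  refine isOpen_compl_iff.1 (isOpen_iff_forall_mem_open.2 fun p hp => ?_)
  obtain ⟨U, hU, hUr, hpU, hpU'⟩ := h p.1 p.2 hp
  exact ⟨U ×ˢ Uᶜ, fun q ⟨hq₁, hq₂⟩ hq => hq₂ (hUr _ hq₁ _ hq), hU.isOpen.prod hU.compl.isOpen,
    hpU, hpU'⟩

theorem IsClosed.setOf_exists_rel {α : Type*} [TopologicalSpace α] [CompactSpace α]
    {r : α → α → Prop} (hr : IsClosed {p : α × α | r p.1 p.2}) {F : Set α} (hF : IsClosed F) :
    IsClosed {a | ∃ b ∈ F, r a b} := by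
  have : {a | ∃ b ∈ F, r a b} = Prod.fst '' ({p : α × α | r p.1 p.2} ∩ Prod.snd ⁻¹' F) := by
    ext a
    simp [and_comm]
  exact this ▸ isClosedMap_fst_of_compactSpace _ (hr.inter (hF.preimage continuous_snd))

theorem setOf_exists_rel_subtype_eq_preimage {α : Type*} {r : α → α → Prop} {T : Set α}
    (hT : ∀ a ∈ T, ∀ b, r a b → b ∈ T) (S : Set α) :
    {a : T | ∃ b ∈ (Subtype.val ⁻¹' S : Set T), r a b} = Subtype.val ⁻¹' {a | ∃ b ∈ S, r a b} := by
  ext ⟨a, ha⟩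
  exact ⟨fun ⟨b, hb, hab⟩ => ⟨b, hb, hab⟩, fun ⟨b, hb, hab⟩ => ⟨⟨b, hT a ha b hab⟩, hb, hab⟩⟩

section Priestley

variable {α : Type*} [TopologicalSpace α]

theorem PriestleySpace.isClosed_Ici [Preorder α] [PriestleySpace α] (x : α) :
    IsClosed (Ici x) := by
  refine isOpen_compl_iff.1 (isOpen_iff_forall_mem_open.2 fun y hy => ?_)
  obtain ⟨U, hU, hUup, hxU, hyU⟩ := exists_isClopen_upper_of_not_le (hy : ¬x ≤ y)
  exact ⟨Uᶜ, fun z hz hxz => hz (hUup hxz hxU), hU.compl.isOpen, hyU⟩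

variable [CompactSpace α] [Preorder α] [PriestleySpace α]

theorem exists_isClopen_isLowerSet_notMem_of_forall_not_le {F : Set α} (hF : IsClosed F) {x : α}
    (hx : ∀ z ∈ F, ¬x ≤ z) : ∃ G, IsClopen G ∧ IsLowerSet G ∧ F ⊆ G ∧ x ∉ G := by
  obtain ⟨G, ⟨hG, hGlow, hxG⟩, hFG⟩ := hF.isCompact.exists_superset_mem_of_supClosed
    (S := {G | IsClopen G ∧ IsLowerSet G ∧ x ∉ G})
    (fun G ⟨hG, hGlow, hxG⟩ H ⟨hH, hHlow, hxH⟩ =>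
      ⟨hG.union hH, hGlow.union hHlow, fun h => h.elim hxG hxH⟩)
    (fun G hG => hG.1.isOpen) ⟨isClopen_empty, isLowerSet_empty, notMem_empty x⟩
    (fun z hz => let ⟨U, hU, hUup, hxU, hzU⟩ := exists_isClopen_upper_of_not_le (hx z hz)
      ⟨Uᶜ, ⟨hU.compl, hUup.compl, not_not.2 hxU⟩, hzU⟩)
  exact ⟨G, hG, hGlow, hFG, hxG⟩

theorem exists_isClopen_isLowerSet_disjoint_of_forall_not_le {K F : Set α} (hK : IsClosed K)
    (hF : IsClosed F) (hKF : ∀ k ∈ K, ∀ z ∈ F, ¬k ≤ z) :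
    ∃ G, IsClopen G ∧ IsLowerSet G ∧ F ⊆ G ∧ Disjoint G K := by
  obtain ⟨H, ⟨hH, hHup, hHF⟩, hKH⟩ := hK.isCompact.exists_superset_mem_of_supClosed
    (S := {H | IsClopen H ∧ IsUpperSet H ∧ Disjoint H F})
    (fun G ⟨hG, hGup, hGF⟩ H ⟨hH, hHup, hHF⟩ => ⟨hG.union hH, hGup.union hHup, hGF.sup_left hHF⟩)
    (fun H hH => hH.1.isOpen) ⟨isClopen_empty, isUpperSet_empty, disjoint_bot_left⟩
    (fun k hk => let ⟨G, hG, hGlow, hFG, hkG⟩ :=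
        exists_isClopen_isLowerSet_notMem_of_forall_not_le hF (hKF k hk)
      ⟨Gᶜ, ⟨hG.compl, hGlow.compl, disjoint_compl_left_iff_subset.2 hFG⟩, hkG⟩)
  exact ⟨Hᶜ, hH.compl, hHup.compl, hHF.subset_compl_left, disjoint_compl_left_iff_subset.2 hKH⟩

end Priestley

instance Pi.priestleySpace {I : Type*} {Y : I → Type*} [∀ i, TopologicalSpace (Y i)]
    [∀ i, Preorder (Y i)] [∀ i, PriestleySpace (Y i)] : PriestleySpace (∀ i, Y i) where
  priestley {f g} h := by
    obtain ⟨i, hi⟩ : ∃ i, ¬f i ≤ g i := by simpa [Pi.le_def] using h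
    obtain ⟨U, hU, hUup, hfU, hgU⟩ := exists_isClopen_upper_of_not_le hi
    exact ⟨(fun p => p i) ⁻¹' U, hU.preimage (continuous_apply i),
      fun a b hab ha => hUup (hab i) ha, hfU, hgU⟩

theorem compl_ccBox (V : Set X) : (ccBox V)ᶜ = ccDia Vᶜ := by
  ext C
  simp [ccBox, ccDia, not_subset, Set.Nonempty]

theorem compl_ccDia (V : Set X) : (ccDia V)ᶜ = ccBox Vᶜ := by
  rw [← compl_compl (ccBox Vᶜ), compl_ccBox, compl_compl]

theorem isClopen_ccBox {V : Set X} (hV : IsClopen V) : IsClopen (ccBox V) :=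
  ⟨isOpen_compl_iff.1 (compl_ccBox V ▸ isOpen_generateFrom_of_mem ⟨Vᶜ, hV.compl, Or.inr rfl⟩),
    isOpen_generateFrom_of_mem ⟨V, hV, Or.inl rfl⟩⟩

theorem isClopen_ccDia {V : Set X} (hV : IsClopen V) : IsClopen (ccDia V) :=
  ⟨isOpen_compl_iff.1 (compl_ccDia V ▸ isOpen_generateFrom_of_mem ⟨Vᶜ, hV.compl, Or.inl rfl⟩),
    isOpen_generateFrom_of_mem ⟨V, hV, Or.inr rfl⟩⟩

section Order

variable {α : Type*} [Preorder α]

theorem lec_total {C K₁ K₂ : Set α} (hC : IsChain (· ≤ ·) C) (h₁ : lec C K₁) (h₂ : lec C K₂) :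
    lec K₁ K₂ ∨ lec K₂ K₁ := by
  have hsub : K₂ ⊆ K₁ ∨ K₁ ⊆ K₂ := by
    by_contra! h
    obtain ⟨⟨a, ha₂, ha₁⟩, ⟨b, hb₁, hb₂⟩⟩ := And.intro (not_subset.1 h.1) (not_subset.1 h.2)
    rcases hC.total (h₂.1 ha₂) (h₁.1 hb₁) with hab | hba
    · exact hb₂ (h₂.2 a ha₂ b (h₁.1 hb₁) hab)
    · exact ha₁ (h₁.2 b hb₁ a (h₂.1 ha₂) hba)
  rcases hsub with h | h
  · exact Or.inl ⟨h, fun x hx y hy hxy => h₂.2 x hx y (h₁.1 hy) hxy⟩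
  · exact Or.inr ⟨h, fun x hx y hy hxy => h₁.2 x hx y (h₂.1 hy) hxy⟩

theorem lec_inter_upperClosure (C P : Set α) : lec C (C ∩ upperClosure P) :=
  ⟨inter_subset_left, fun _ hx _ hy hxy => ⟨hy, (upperClosure P).upper hxy hx.2⟩⟩

theorem subset_or_inter_nonempty_of_lec {U B D E : Set α} (hU : IsUpperSet U) (hBU : B ⊆ U)
    (hD : IsChain (· ≤ ·) D) (hDE : lec D E) (h : D ⊆ U ∨ (D ∩ B).Nonempty) :
    E ⊆ U ∨ (E ∩ B).Nonempty := by
  rcases h with hDU | ⟨b, hbD, hbB⟩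
  · exact Or.inl (hDE.1.trans hDU)
  by_cases hb : ∃ k ∈ E, k ≤ b
  · obtain ⟨k, hkE, hkb⟩ := hb
    exact Or.inr ⟨b, hDE.2 k hkE b hbD hkb, hbB⟩
  · refine Or.inl fun k hkE => ?_
    rcases hD.total hbD (hDE.1 hkE) with hbk | hkb
    · exact hU hbk (hBU hbB)
    · exact absurd ⟨k, hkE, hkb⟩ hb

theorem IsUpperSet.image_of_lec {Y : Type*} [PartialOrder Y] {p : α → Y} (hp : Monotone p)
    {C₁ C₂ : Set α} (hC₁ : IsChain (· ≤ ·) C₁) (h : lec C₁ C₂) (hup : IsUpperSet (p '' C₁)) :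
    IsUpperSet (p '' C₂) := by
  rintro _ b hab ⟨f, hf, rfl⟩
  obtain ⟨g, hg, rfl⟩ := hup hab ⟨f, h.1 hf, rfl⟩
  rcases hC₁.total (h.1 hf) hg with hfg | hgf
  · exact ⟨g, h.2 f hf g hg hfg, rfl⟩
  · exact ⟨f, hf, le_antisymm hab (hp hgf)⟩

end Order

theorem TopologicalSpace.Compacts.isClosed_setOf_isChain [PriestleySpace X] :
    IsClosed {K : Compacts X | IsChain (· ≤ ·) (K : Set X)} := by
  refine isOpen_compl_iff.1 (isOpen_iff_forall_mem_open.2 fun K hK => ?_)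
  obtain ⟨x, hx, y, hy, -, hxy, hyx⟩ :
      ∃ x ∈ (K : Set X), ∃ y ∈ (K : Set X), x ≠ y ∧ ¬x ≤ y ∧ ¬y ≤ x := by
    simpa [IsChain, Set.Pairwise] using hK
  obtain ⟨U, hU, hUup, hxU, hyU⟩ := exists_isClopen_upper_of_not_le hxy
  obtain ⟨W, hW, hWup, hyW, hxW⟩ := exists_isClopen_upper_of_not_le hyx
  refine ⟨{L | ((L : Set X) ∩ (U \ W)).Nonempty} ∩ {L | ((L : Set X) ∩ (W \ U)).Nonempty}, ?_,
    (Compacts.isOpen_inter_nonempty_of_isOpen (hU.isOpen.sdiff hW.isClosed)).inter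
      (Compacts.isOpen_inter_nonempty_of_isOpen (hW.isOpen.sdiff hU.isClosed)),
    ⟨x, hx, hxU, hxW⟩, ⟨y, hy, hyW, hyU⟩⟩
  rintro L ⟨⟨a, haL, haU, haW⟩, ⟨b, hbL, hbW, hbU⟩⟩ hL
  rcases hL.total haL hbL with hab | hba
  · exact hbU (hUup hab haU)
  · exact haW (hWup hba hbW)

theorem inter_upperClosure_mem_CC [PriestleySpace X] (C : CC X) {P : Set X} (hP : P.Finite)
    (hPC : P ⊆ C) (hne : P.Nonempty) : (C : Set X) ∩ upperClosure P ∈ CC X := by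
  refine ⟨hne.mono (subset_inter hPC subset_upperClosure), C.2.2.1.inter ?_,
    C.2.2.2.mono inter_subset_left⟩
  rw [coe_upperClosure]
  exact hP.isClosed_biUnion fun p _ => PriestleySpace.isClosed_Ici p

section PriestleyChains

variable {Z : Type*} [TopologicalSpace Z] [PartialOrder Z] [CompactSpace Z] [PriestleySpace Z]

section Vietoris

attribute [local instance] TopologicalSpace.vietoris

theorem isInducing_subtypeVal_CC : IsInducing (Subtype.val : CC Z → Set Z) := by
  refine ⟨?_⟩
  change ccTop = induced Subtype.val (generateFrom _)
  rw [induced_generateFrom_eq]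
  refine le_antisymm (le_generateFrom ?_) (le_generateFrom ?_)
  · rintro _ ⟨_, ⟨U, hU, rfl⟩ | ⟨U, hU, rfl⟩, rfl⟩
    · refine isOpen_iff_forall_mem_open.2 fun C hC => ?_
      obtain ⟨V, hV, hCV, hVU⟩ :=
        C.2.2.1.isCompact.exists_isClopen_subset_of_subset_isOpen hU hC
      exact ⟨ccBox V, fun D hD => hD.trans hVU, (isClopen_ccBox hV).isOpen, hCV⟩
    · refine isOpen_iff_forall_mem_open.2 fun C ⟨x, hxC, hxU⟩ => ?_
      obtain ⟨V, hV, hxV, hVU⟩ := compact_exists_isClopen_in_isOpen hU hxU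
      exact ⟨ccDia V, fun D ⟨y, hyD, hyV⟩ => ⟨y, hyD, hVU hyV⟩, (isClopen_ccDia hV).isOpen,
        x, hxC, hxV⟩
  · rintro _ ⟨V, hV, rfl | rfl⟩
    · exact isOpen_generateFrom_of_mem ⟨_, .inl ⟨V, hV.isOpen, rfl⟩, rfl⟩
    · exact isOpen_generateFrom_of_mem ⟨_, .inr ⟨V, hV.isOpen, rfl⟩, rfl⟩

def ccToCompacts (C : CC Z) : Compacts Z := ⟨C, C.2.2.1.isCompact⟩

theorem isEmbedding_ccToCompacts : IsEmbedding (ccToCompacts : CC Z → Compacts Z) :=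
  ⟨(Compacts.isEmbedding_coe.isInducing.of_comp_iff).1 isInducing_subtypeVal_CC,
    fun _ _ h => Subtype.ext (congrArg SetLike.coe h)⟩

end Vietoris

theorem range_ccToCompacts : range (ccToCompacts : CC Z → Compacts Z) =
    {K : Compacts Z | (K : Set Z).Nonempty} ∩ {K | IsChain (· ≤ ·) (K : Set Z)} := by
  ext K
  refine ⟨?_, fun ⟨hne, hK⟩ => ⟨⟨K, hne, K.isCompact.isClosed, hK⟩, rfl⟩⟩
  rintro ⟨C, rfl⟩
  exact ⟨C.2.1, C.2.2.2⟩

theorem isClosedEmbedding_ccToCompacts :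
    IsClosedEmbedding (ccToCompacts : CC Z → Compacts Z) := by
  refine ⟨isEmbedding_ccToCompacts, ?_⟩
  rw [range_ccToCompacts]
  refine IsClosed.inter ?_ Compacts.isClosed_setOf_isChain
  simp_rw [Compacts.coe_nonempty]
  exact Compacts.isClopen_singleton_bot.isOpen.isClosed_compl

instance : CompactSpace (CC Z) := isClosedEmbedding_ccToCompacts.compactSpace

theorem exists_finite_isClopen_ccBox_inter_ccDia_subset {O : Set (CC Z)} (hO : IsOpen O)
    {K : CC Z} (hK : K ∈ O) :
    ∃ u : Set (Set Z), u.Finite ∧ (∀ W ∈ u, IsClopen W) ∧ K ∈ ccBox (⋃₀ u) ∧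
      (∀ W ∈ u, K ∈ ccDia W) ∧ ∀ C ∈ ccBox (⋃₀ u), (∀ W ∈ u, C ∈ ccDia W) → C ∈ O := by
  obtain ⟨_, ⟨_, ⟨u, ⟨hu, huc⟩, rfl⟩, rfl⟩, ⟨hKu, hKW⟩, hsub⟩ :=
    (isTopologicalBasis_isClopen.compacts.isInducing
      isEmbedding_ccToCompacts.isInducing).exists_subset_of_mem_open hK hO
  exact ⟨u, hu, huc, hKu, hKW, fun C hCu hCW => hsub ⟨hCu, hCW⟩⟩

theorem exists_isClopen_lec_upper_of_not_lec {C K : CC Z} (h : ¬lec (C : Set Z) K) :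
    ∃ 𝒰 : Set (CC Z), IsClopen 𝒰 ∧ (∀ D ∈ 𝒰, ∀ E : CC Z, lec (D : Set Z) E → E ∈ 𝒰) ∧
      C ∈ 𝒰 ∧ K ∉ 𝒰 := by
  by_cases hKC : (K : Set Z) ⊆ C
  · obtain ⟨x, hxK, y, hyC, hxy, hyK⟩ :
        ∃ x ∈ (K : Set Z), ∃ y ∈ (C : Set Z), x ≤ y ∧ y ∉ (K : Set Z) := by
      simpa [lec, hKC] using h
    obtain ⟨U, hU, hUup, hyU, hxU⟩ :=
      exists_isClopen_upper_of_not_le fun hyx : y ≤ x => hyK (le_antisymm hyx hxy ▸ hxK)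
    obtain ⟨W, hW, hyW, hWK⟩ := compact_exists_isClopen_in_isOpen K.2.2.1.isOpen_compl hyK
    refine ⟨ccBox U ∪ ccDia (U ∩ W), (isClopen_ccBox hU).union (isClopen_ccDia (hU.inter hW)),
      fun D hD E hDE => subset_or_inter_nonempty_of_lec hUup inter_subset_left D.2.2.2 hDE hD,
      Or.inr ⟨y, hyC, hyU, hyW⟩, ?_⟩
    rintro (hKU | ⟨w, hwK, -, hwW⟩)
    · exact hxU (hKU hxK)
    · exact hWK hwW hwK
  · obtain ⟨x, hxK, hxC⟩ := not_subset.1 hKC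
    obtain ⟨V, hV, hxV, hVC⟩ := compact_exists_isClopen_in_isOpen C.2.2.1.isOpen_compl hxC
    exact ⟨ccBox Vᶜ, isClopen_ccBox hV.compl, fun D hD E hDE => hDE.1.trans hD,
      fun c hc hcV => hVC hcV hc, fun hK => hK hxK hxV⟩

theorem isClosed_setOf_exists_lec {𝒱 : Set (CC Z)} (h𝒱 : IsClosed 𝒱) :
    IsClosed {C : CC Z | ∃ K ∈ 𝒱, lec (C : Set Z) K} :=
  (isClosed_setOf_rel_of_exists_isClopen fun _ _ h => exists_isClopen_lec_upper_of_not_lec h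
    ).setOf_exists_rel h𝒱

theorem isOpen_setOf_exists_lec {𝒱 : Set (CC Z)} (h𝒱 : IsOpen 𝒱) :
    IsOpen {C : CC Z | ∃ K ∈ 𝒱, lec (C : Set Z) K} := by
  refine isOpen_iff_forall_mem_open.2 ?_
  rintro C ⟨K, hK𝒱, hCK⟩
  obtain ⟨u, hu, huc, hKu, hKW, hu𝒱⟩ := exists_finite_isClopen_ccBox_inter_ccDia_subset h𝒱 hK𝒱
  have hU : IsClopen (⋃₀ u) := sUnion_eq_biUnion ▸ hu.isClopen_biUnion huc
  -- `K` is an upset of `C` inside `⋃₀ u`, so nothing of `C` outside `⋃₀ u` lies above `K`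
  obtain ⟨G, hG, hGlow, hCG, hGK⟩ := exists_isClopen_isLowerSet_disjoint_of_forall_not_le
    K.2.2.1 (C.2.2.1.sdiff hU.isOpen)
    fun k hk z ⟨hzC, hzu⟩ hkz => hzu (hKu (hCK.2 k hk z hzC hkz))
  refine ⟨ccBox (⋃₀ u ∪ G) ∩ ⋂ W ∈ u, ccDia (W \ G), ?_,
    (isClopen_ccBox (hU.union hG)).isOpen.inter
      (hu.isOpen_biInter fun W hW => (isClopen_ccDia ((huc W hW).diff hG)).isOpen),
    fun z hzC => (em (z ∈ ⋃₀ u)).elim Or.inl fun hzu => Or.inr (hCG ⟨hzC, hzu⟩),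
    mem_iInter₂.2 fun W hW => ?_⟩
  · rintro C' ⟨hC'G, hC'W⟩
    have : Nonempty Z := ⟨C.2.1.some⟩
    choose! p hpC' hpW hpG using fun W hW => mem_iInter₂.1 hC'W W hW
    obtain ⟨k, hk⟩ := K.2.1
    obtain ⟨W₀, hW₀, -⟩ := hKu hk
    -- the part of `C'` above the witnesses `p W` avoids the lower set `G`
    refine ⟨⟨_, inter_upperClosure_mem_CC C' (hu.image p) (image_subset_iff.2 hpC')
      ⟨p W₀, W₀, hW₀, rfl⟩⟩, hu𝒱 _ ?_ fun W hW => ⟨p W, ⟨hpC' W hW, subset_upperClosure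
      ⟨W, hW, rfl⟩⟩, hpW W hW⟩, lec_inter_upperClosure _ _⟩
    rintro z ⟨hzC', hpz⟩
    obtain ⟨_, ⟨W, hW, rfl⟩, hpWz⟩ := mem_upperClosure.1 hpz
    exact (hC'G hzC').resolve_right fun hzG => hpG W hW (hGlow hpWz hzG)
  · obtain ⟨k, hkK, hkW⟩ := hKW W hW
    exact ⟨k, hCK.1 hkK, hkW, fun hkG => disjoint_left.1 hGK hkG hkK⟩

theorem isClopen_setOf_exists_lec_of_upper {T : Set (CC Z)}
    (hT : ∀ C ∈ T, ∀ K : CC Z, lec (C : Set Z) K → K ∈ T) {𝒱 : Set T} (h𝒱 : IsClopen 𝒱) :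
    IsClopen {C : T | ∃ K ∈ 𝒱, lec (C.1 : Set Z) K.1} := by
  obtain ⟨F, hF, rfl⟩ := isClosed_induced_iff.1 h𝒱.isClosed
  obtain ⟨O, hO, hOF⟩ := isOpen_induced_iff.1 h𝒱.isOpen
  refine ⟨?_, ?_⟩
  · rw [setOf_exists_rel_subtype_eq_preimage hT]
    exact (isClosed_setOf_exists_lec hF).preimage continuous_subtype_val
  · rw [← hOF, setOf_exists_rel_subtype_eq_preimage hT]
    exact (isOpen_setOf_exists_lec hO).preimage continuous_subtype_val

end PriestleyChains

theorem isClosed_setOf_isUpperSet_image [CompactSpace X] {Y : Type*} [TopologicalSpace Y]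
    [PartialOrder Y] [CompactSpace Y] [PriestleySpace Y]
    (hY : ∀ V : Set Y, IsClopen V → IsClopen {x : Y | ∃ y ∈ V, x ≤ y}) {p : X → Y}
    (hp : Continuous p) : IsClosed {C : CC X | IsUpperSet (p '' C)} := by
  refine isOpen_compl_iff.1 (isOpen_iff_forall_mem_open.2 fun C hC => ?_)
  obtain ⟨_, b, hab, ⟨f, hfC, rfl⟩, hb⟩ : ∃ a b, a ≤ b ∧ a ∈ p '' C ∧ b ∉ p '' C := by
    simpa [IsUpperSet] using hC
  obtain ⟨W, hW, hbW, hWC⟩ :=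
    compact_exists_isClopen_in_isOpen (C.2.2.1.isCompact.image hp).isClosed.isOpen_compl hb
  refine ⟨ccDia (p ⁻¹' ({x | ∃ y ∈ W, x ≤ y} \ W)) ∩ ccBox (p ⁻¹' Wᶜ), ?_,
    ((isClopen_ccDia (((hY W hW).diff hW).preimage hp)).inter
      (isClopen_ccBox (hW.compl.preimage hp))).isOpen,
    ⟨f, hfC, ⟨b, hbW, hab⟩, fun hfW => hWC hfW ⟨f, hfC, rfl⟩⟩,
    fun g hg hgW => hWC hgW ⟨g, hg, rfl⟩⟩
  rintro C' ⟨⟨f', hf'C', ⟨y, hyW, hf'y⟩, -⟩, hC'W⟩ hup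
  obtain ⟨g, hg, rfl⟩ := hup hf'y ⟨f', hf'C', rfl⟩
  exact hC'W hg hyW

theorem stmt10_general (I : Type*) (Y : I → Type*) [∀ i, TopologicalSpace (Y i)]
    [∀ i, PartialOrder (Y i)] [∀ i, CompactSpace (Y i)] [∀ i, PriestleySpace (Y i)]
    (hEsa : ∀ i, ∀ V : Set (Y i), IsClopen V → IsClopen {x : Y i | ∃ y ∈ V, x ≤ y}) :
    IsClosed (tensor Y) ∧
    (∀ C₁ C₂ : ↥(CC (∀ i, Y i)), lec (C₁ : Set (∀ i, Y i)) (C₂ : Set (∀ i, Y i)) →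
      C₁ ∈ tensor Y → C₂ ∈ tensor Y) ∧
    CompactSpace ↥(tensor Y) ∧
    (∀ A B : ↥(tensor Y), ¬ lec (A.1 : Set (∀ i, Y i)) (B.1 : Set (∀ i, Y i)) →
      ∃ 𝒰 : Set ↥(tensor Y), IsClopen 𝒰 ∧
        (∀ D ∈ 𝒰, ∀ E : ↥(tensor Y),
          lec (D.1 : Set (∀ i, Y i)) (E.1 : Set (∀ i, Y i)) → E ∈ 𝒰) ∧
        A ∈ 𝒰 ∧ B ∉ 𝒰) ∧
    (∀ 𝒱 : Set ↥(tensor Y), IsClopen 𝒱 →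
      IsClopen {C : ↥(tensor Y) |
        ∃ K ∈ 𝒱, lec (C.1 : Set (∀ i, Y i)) (K.1 : Set (∀ i, Y i))}) ∧
    (∀ C : ↥(tensor Y),
      IsChain (fun K₁ K₂ : ↥(tensor Y) =>
          lec (K₁.1 : Set (∀ i, Y i)) (K₂.1 : Set (∀ i, Y i)))
        {K : ↥(tensor Y) | lec (C.1 : Set (∀ i, Y i)) (K.1 : Set (∀ i, Y i))}) := by
  have hclosed : IsClosed (tensor Y) := by
    have : tensor Y =
        ⋂ i, {C : CC (∀ i, Y i) | IsUpperSet ((fun f : ∀ i, Y i => f i) '' (C : Set _))} := by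
      ext
      simp [tensor]
    exact this ▸ isClosed_iInter fun i =>
      isClosed_setOf_isUpperSet_image (hEsa i) (continuous_apply i)
  have hupper : ∀ C₁ C₂ : CC (∀ i, Y i), lec (C₁ : Set (∀ i, Y i)) C₂ →
      C₁ ∈ tensor Y → C₂ ∈ tensor Y :=
    fun C₁ _ h h₁ i => (h₁ i).image_of_lec (Function.monotone_eval i) C₁.2.2.2 h
  refine ⟨hclosed, hupper, isCompact_iff_compactSpace.1 hclosed.isCompact, fun A B hAB => ?_,
    fun _ => isClopen_setOf_exists_lec_of_upper fun C hC K hCK => hupper C K hCK hC,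
    fun C _ hK₁ _ hK₂ _ => lec_total C.1.2.2.2 hK₁ hK₂⟩
  obtain ⟨𝒰, h𝒰, h𝒰up, hA, hB⟩ := exists_isClopen_lec_upper_of_not_lec hAB
  exact ⟨Subtype.val ⁻¹' 𝒰, h𝒰.preimage continuous_subtype_val,
    fun D hD E hDE => h𝒰up D hD E hDE, hA, hB⟩

/-- `⊗Yᵢ` is a closed subset and a `⊴`-upset of `CC(∏Yᵢ)`; consequently, with the
induced topology and order it is an Esakia root system (compact, Priestley-separated by
clopen `⊴`-upsets, the `⊴`-downset of every clopen is clopen, root system). -/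
theorem stmt10 (I : Type*) (Y : I → Type*) [∀ i, TopologicalSpace (Y i)]
    [∀ i, PartialOrder (Y i)] [∀ i, CompactSpace (Y i)] [∀ i, PriestleySpace (Y i)]
    (hEsa : ∀ i, ∀ V : Set (Y i), IsClopen V → IsClopen {x : Y i | ∃ y ∈ V, x ≤ y})
    (hRoot : ∀ i, ∀ y : Y i, IsChain (· ≤ ·) (Ici y)) :
    IsClosed (tensor Y) ∧
    (∀ C₁ C₂ : ↥(CC (∀ i, Y i)), lec (C₁ : Set (∀ i, Y i)) (C₂ : Set (∀ i, Y i)) →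
      C₁ ∈ tensor Y → C₂ ∈ tensor Y) ∧
    CompactSpace ↥(tensor Y) ∧
    (∀ A B : ↥(tensor Y), ¬ lec (A.1 : Set (∀ i, Y i)) (B.1 : Set (∀ i, Y i)) →
      ∃ 𝒰 : Set ↥(tensor Y), IsClopen 𝒰 ∧
        (∀ D ∈ 𝒰, ∀ E : ↥(tensor Y),
          lec (D.1 : Set (∀ i, Y i)) (E.1 : Set (∀ i, Y i)) → E ∈ 𝒰) ∧
        A ∈ 𝒰 ∧ B ∉ 𝒰) ∧
    (∀ 𝒱 : Set ↥(tensor Y), IsClopen 𝒱 →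
      IsClopen {C : ↥(tensor Y) |
        ∃ K ∈ 𝒱, lec (C.1 : Set (∀ i, Y i)) (K.1 : Set (∀ i, Y i))}) ∧
    (∀ C : ↥(tensor Y),
      IsChain (fun K₁ K₂ : ↥(tensor Y) =>
          lec (K₁.1 : Set (∀ i, Y i)) (K₂.1 : Set (∀ i, Y i)))
        {K : ↥(tensor Y) | lec (C.1 : Set (∀ i, Y i)) (K.1 : Set (∀ i, Y i))}) :=
  stmt10_general I Y hEsa
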